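/- arXiv:1411.4949 — 5 statements merged into one kernel-verified Lean document; each statement's English description precedes it below -/
import Mathlib

section
/- Let M be a finite nonempty set of candidates, s : M → ℝ a score vector with s(c) ≥ 0 for all c, and r ≥ 0. Then a candidate c is a possible winner at uncertainty r in s (c ∈ W_r(s)) if and only if s(c) ≥ (1+r)^{-2} · max_{a ∈ M} s(a). -/
/-- The multiplicative distance between two (positive) score vectors. -/
noncomputable def multDist {M : Type*} [Fintype M] [Nonempty M] (s s' : M → ℝ) : ℝ :=
  Finset.univ.sup' Finset.univ_nonempty (fun c => max (s' c / s c) (s c / s' c) - 1)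

/-- The uncertainty set `S(s,r)`: candidate-wise multiplicative interval around `s`. -/
def uncSet {M : Type*} (s : M → ℝ) (r : ℝ) : Set (M → ℝ) :=
  {s' | ∀ c, s c / (1 + r) ≤ s' c ∧ s' c ≤ s c * (1 + r)}

/-- The set of possible winners `W_r(s)`. -/
def possWinners {M : Type*} (s : M → ℝ) (r : ℝ) : Set M :=
  {c | ∃ s' ∈ uncSet s r, ∀ a, s' a ≤ s' c}

open Classical in
/-- The perceived outcome `f(s',Q,c)` when voting `c`, under tie-breaker `Q`. -/
noncomputable def outcome {M : Type*} [Fintype M] [Nonempty M]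
    (Q : LinearOrder M) (s' : M → ℝ) (c : M) : M :=
  if ∀ a, s' a ≤ s' c then c
  else
    @Finset.min' M Q (Finset.univ.filter (fun x => ∀ a, s' a ≤ s' x))
      (by
        obtain ⟨b, _, hb⟩ :=
          Finset.exists_max_image (Finset.univ : Finset M) s' Finset.univ_nonempty
        exact ⟨b, Finset.mem_filter.mpr
          ⟨Finset.mem_univ b, fun a => hb a (Finset.mem_univ a)⟩⟩)

/-- `a` `S(s,r)`-beats `b` for a voter with preference order `P`. -/
def beats {M : Type*} [Fintype M] [Nonempty M]
    (P : LinearOrder M) (r : ℝ) (s : M → ℝ) (a b : M) : Prop :=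
  ∃ s' ∈ uncSet s r, ∃ Q : LinearOrder M, P.lt (outcome Q s' b) (outcome Q s' a)

/-- `a` `S(s,r)`-dominates `b`. -/
def dominates {M : Type*} [Fintype M] [Nonempty M]
    (P : LinearOrder M) (r : ℝ) (s : M → ℝ) (a b : M) : Prop :=
  beats P r s a b ∧ ¬ beats P r s b a

/-- `D(s,a)`: candidates that `S(s,r)`-dominate the current vote `a`
and are themselves not `S(s,r)`-dominated. -/
def Dset {M : Type*} [Fintype M] [Nonempty M]
    (P : LinearOrder M) (r : ℝ) (s : M → ℝ) (a : M) : Set M :=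
  {c | dominates P r s c a ∧ ∀ d, ¬ dominates P r s d c}

open Classical in
/-- The response set `g(a,s)` of a weak LD voter. -/
noncomputable def responseSet {M : Type*} [Fintype M] [Nonempty M]
    (P : LinearOrder M) (r : ℝ) (s : M → ℝ) (a : M) : Set M :=
  if Dset P r s a = ∅ then {a} else Dset P r s a

/-- `u` is a cardinal utility scale fitting the preference order `P`. -/
def fits {M : Type*} (P : LinearOrder M) (u : M → ℝ) : Prop :=
  ∀ a b, P.lt b a → u b < u a

/-- The regret for voting `b` under score vector `s'` and tie-breaker `Q`. -/
noncomputable def regret {M : Type*} [Fintype M] [Nonempty M]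
    (u : M → ℝ) (Q : LinearOrder M) (s' : M → ℝ) (b : M) : ℝ :=
  Finset.univ.sup' Finset.univ_nonempty (fun c => u (outcome Q s' c)) - u (outcome Q s' b)

/-- The worst-case regret `WCR_r(s,b)`. -/
noncomputable def WCR {M : Type*} [Fintype M] [Nonempty M]
    (u : M → ℝ) (r : ℝ) (s : M → ℝ) (b : M) : ℝ :=
  sSup {x | ∃ s' ∈ uncSet s r, ∃ Q : LinearOrder M, x = regret u Q s' b}

open Classical in
/-- The score vector of an action profile (unit-weight voters). -/
noncomputable def score {M : Type*} {I : Type*} [Fintype I] (a : I → M) (c : M) : ℝ :=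
  ((Finset.univ.filter (fun i => a i = c)).card : ℝ)

open Classical in
/-- The score vector of an action profile with voter weights `w`. -/
noncomputable def wscore {M : Type*} {I : Type*} [Fintype I]
    (w : I → ℝ) (a : I → M) (c : M) : ℝ :=
  ∑ i ∈ Finset.univ.filter (fun i => a i = c), w i

/-- A valid step of the weak LD dynamics: every voter either keeps her vote
or makes a weak LD move. -/
def validStep {M : Type*} [Fintype M] [Nonempty M] {I : Type*} [Fintype I]
    (P : I → LinearOrder M) (r : I → ℝ) (a a'' : I → M) : Prop :=
  ∀ i, a'' i = a i ∨ (a'' i ∈ Dset (P i) (r i) (score a) (a i) ∧ a'' i ≠ a i)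

/-- The truthful profile: every voter votes for her most preferred candidate. -/
def truthful {M : Type*} {I : Type*} (P : I → LinearOrder M) (a : I → M) : Prop :=
  ∀ i c, (P i).le c (a i)

/-- `c` is a possible winner at uncertainty `r` iff its score is at
least `(1+r)^{-2}` times the maximal score. -/
theorem possWinner_iff_threshold {M : Type*} [Fintype M] [Nonempty M]
    (s : M → ℝ) (hs : ∀ c, 0 ≤ s c) (r : ℝ) (hr : 0 ≤ r) (c : M) :
    c ∈ possWinners s r ↔
      ((1 + r) ^ 2)⁻¹ * Finset.univ.sup' Finset.univ_nonempty s ≤ s c := by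
  have h1 : (0:ℝ) < 1 + r := by linarith
  have hsq : (0:ℝ) < (1 + r) ^ 2 := by positivity
  constructor
  · rintro ⟨s', hs', hmax⟩
    rw [inv_mul_le_iff₀ hsq]
    apply Finset.sup'_le
    intro a _
    have ha := (hs' a).1
    have hc := (hs' c).2
    have key : s a / (1 + r) ≤ s c * (1 + r) := le_trans ha (le_trans (hmax a) hc)
    rw [div_le_iff₀ h1] at key
    nlinarith
  · intro h
    classical
    rw [inv_mul_le_iff₀ hsq] at h
    refine ⟨fun a => if a = c then s c * (1 + r) else s a / (1 + r), ?_, ?_⟩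
    · intro a
      by_cases hac : a = c
      · subst hac
        simp only [eq_self_iff_true, if_true]
        constructor
        · rw [div_le_iff₀ h1]; nlinarith [mul_nonneg (hs a) hr, mul_nonneg (mul_nonneg (hs a) hr) hr]
        · exact le_refl _
      · simp only [if_neg hac]
        constructor
        · exact le_refl _
        · rw [div_le_iff₀ h1]; nlinarith [mul_nonneg (hs a) hr, mul_nonneg (mul_nonneg (hs a) hr) hr]
    · intro a
      by_cases hac : a = c
      · subst hac; simp
      · simp only [if_neg hac, eq_self_iff_true, if_true]
        have hsa : s a ≤ Finset.univ.sup' Finset.univ_nonempty s :=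
          Finset.le_sup' s (Finset.mem_univ a)
        rw [div_le_iff₀ h1]
        nlinarith
end

section
/- (Lemma 1, 'pairs') Let M be a finite nonempty set of candidates, s : M → ℝ a score vector with s(c) ≥ 0 for all c, and r ≥ 0. Every pair of possible winners are tied in some possible state: for every b, c ∈ W_r(s) there exists s' ∈ S(s,r) such that s'(b) = s'(c) and s'(b) ≥ s'(a) for all a ∈ M. -/
/-- Lemma 1, 'pairs': every pair of possible winners are tied in
some possible state. -/
theorem possWinners_pairs_tied {M : Type*} [Fintype M] [Nonempty M]
    (s : M → ℝ) (hs : ∀ c, 0 ≤ s c) (r : ℝ) (hr : 0 ≤ r)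
    (b c : M) (hb : b ∈ possWinners s r) (hc : c ∈ possWinners s r) :
    ∃ s' ∈ uncSet s r, s' b = s' c ∧ ∀ a, s' a ≤ s' b := by
  classical
  have hpos : (0:ℝ) < 1 + r := by linarith
  set t : ℝ := Finset.univ.sup' Finset.univ_nonempty (fun a => s a / (1 + r)) with ht
  have hle : ∀ a : M, s a / (1 + r) ≤ t := fun a =>
    Finset.le_sup' (fun x => s x / (1 + r)) (Finset.mem_univ a)
  have key : ∀ d : M, d ∈ possWinners s r → t ≤ s d * (1 + r) := by
    intro d hd
    obtain ⟨s₁, hs₁, hmax⟩ := hd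
    apply Finset.sup'_le
    intro a _
    have h1 := (hs₁ a).1
    have h2 := (hs₁ d).2
    have := hmax a
    linarith
  refine ⟨fun a => if a = b ∨ a = c then t else s a / (1 + r), ?_, ?_, ?_⟩
  · intro a
    by_cases h : a = b ∨ a = c
    · simp only [h, if_pos]
      constructor
      · exact hle a
      · rcases h with h | h <;> subst h
        · exact key _ hb
        · exact key _ hc
    · simp only [h, if_neg, not_false_iff]
      refine ⟨le_refl _, ?_⟩
      have h0 := hs a
      rw [div_le_iff₀ hpos]
      nlinarith [mul_nonneg h0 hr, mul_nonneg (mul_nonneg h0 hr) hr]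
  · simp
  · intro a
    by_cases h : a = b ∨ a = c <;> simp [h, hle a]
end

section
/- (Lemma 3, part 1) Consider a voter with strict preference order ≻ and uncertainty level r ≥ 0, with current vote a in state s, and suppose a → a' is a weak LD move (i.e., a' ∈ D(s,a) and a' ≠ a). Then a' ∈ W_r(s), and there exists some c ∈ W_r(s) with a' ≻ c. -/
section helpers
variable {M : Type*} [Fintype M] [Nonempty M]

lemma outcome_eq_self (Q : LinearOrder M) (s' : M → ℝ) (c : M)
    (h : ∀ b, s' b ≤ s' c) : outcome Q s' c = c := by
  unfold outcome; rw [if_pos h]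

lemma outcome_max (Q : LinearOrder M) (s' : M → ℝ) (c : M) :
    ∀ b, s' b ≤ s' (outcome Q s' c) := by
  intro b
  by_cases h : ∀ x, s' x ≤ s' c
  · rw [outcome_eq_self Q s' c h]; exact h b
  · unfold outcome; rw [if_neg h]
    have hmem := @Finset.min'_mem M Q (Finset.univ.filter (fun x => ∀ a, s' a ≤ s' x))
      (by
        obtain ⟨b, _, hb⟩ :=
          Finset.exists_max_image (Finset.univ : Finset M) s' Finset.univ_nonempty
        exact ⟨b, Finset.mem_filter.mpr
          ⟨Finset.mem_univ b, fun a => hb a (Finset.mem_univ a)⟩⟩)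
    exact (Finset.mem_filter.mp hmem).2 b

lemma outcome_congr (Q : LinearOrder M) (s' : M → ℝ) (c d : M)
    (hc : ¬ ∀ b, s' b ≤ s' c) (hd : ¬ ∀ b, s' b ≤ s' d) :
    outcome Q s' c = outcome Q s' d := by
  unfold outcome; rw [if_neg hc, if_neg hd]

lemma exists_bot_order (x : M) : ∃ Q : LinearOrder M, ∀ y, Q.le x y := by
  classical
  have inj : Function.Injective
      (fun y => if y = x then 0 else ((Fintype.equivFin M) y : ℕ) + 1) := by
    intro y z h
    dsimp only at h
    by_cases hy : y = x <;> by_cases hz : z = x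
    · rw [hy, hz]
    · rw [if_pos hy, if_neg hz] at h; exact absurd h.symm (Nat.succ_ne_zero _)
    · rw [if_neg hy, if_pos hz] at h; exact absurd h (Nat.succ_ne_zero _)
    · rw [if_neg hy, if_neg hz] at h
      have h2 : ((Fintype.equivFin M y : ℕ)) = (Fintype.equivFin M z : ℕ) := by omega
      exact (Fintype.equivFin M).injective (Fin.val_injective h2)
  refine ⟨LinearOrder.lift' _ inj, fun y => ?_⟩
  show (if x = x then 0 else ((Fintype.equivFin M) x : ℕ) + 1) ≤ _
  rw [if_pos rfl]; exact Nat.zero_le _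

lemma outcome_nonmax_bot (Q : LinearOrder M) (s' : M → ℝ) (c x : M)
    (hc : ¬ ∀ b, s' b ≤ s' c) (hx : ∀ b, s' b ≤ s' x) (hbot : ∀ y, Q.le x y) :
    outcome Q s' c = x := by
  unfold outcome; rw [if_neg hc]
  letI := Q
  refine le_antisymm (Finset.min'_le _ _ ?_) (Finset.le_min' _ _ _ fun y _ => hbot y)
  exact Finset.mem_filter.mpr ⟨Finset.mem_univ x, hx⟩

lemma maxim_possWinner {s : M → ℝ} {r : ℝ} {s' : M → ℝ} (h1 : s' ∈ uncSet s r)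
    {c : M} (h2 : ∀ b, s' b ≤ s' c) : c ∈ possWinners s r := ⟨s', h1, h2⟩

lemma possWinner_bound {s : M → ℝ} {r : ℝ} {c : M} (h : c ∈ possWinners s r) (x : M) :
    s x / (1 + r) ≤ s c * (1 + r) := by
  obtain ⟨s', hS, hmax⟩ := h
  exact le_trans (hS x).1 (le_trans (hmax x) (hS c).2)

end helpers

lemma plt_irrefl {M : Type*} (P : LinearOrder M) (x : M) : ¬ P.lt x x :=
  fun h => ((P.lt_iff_le_not_ge x x).mp h).2 (P.le_refl x)

lemma plt_of_le_of_ne {M : Type*} (P : LinearOrder M) {x y : M}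
    (hle : P.le x y) (hne : x ≠ y) : P.lt x y :=
  (P.lt_iff_le_not_ge x y).mpr ⟨hle, fun h => hne (P.le_antisymm x y hle h)⟩

lemma ple_of_not_lt {M : Type*} (P : LinearOrder M) {x y : M}
    (h : ¬ P.lt x y) : P.le y x := by
  rcases P.le_total y x with h' | h'
  · exact h'
  · by_cases hyx : P.le y x
    · exact hyx
    · exact absurd ((P.lt_iff_le_not_ge x y).mpr ⟨h', hyx⟩) h

/-- Lemma 3, part 1: a weak LD move goes to a possible winner,
and some possible winner is less preferred than the new vote. Here `P.lt x y`
means the voter strictly prefers `y` to `x` (i.e. `y ≻ x`). -/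
theorem weak_LD_move_to_possWinner {M : Type*} [Fintype M] [Nonempty M]
    (P : LinearOrder M) (r : ℝ) (hr : 0 ≤ r)
    (s : M → ℝ) (hs : ∀ c, 0 ≤ s c)
    (a a' : M) (hmove : a' ∈ Dset P r s a) (hne : a' ≠ a) :
    a' ∈ possWinners s r ∧ ∃ c ∈ possWinners s r, P.lt c a' := by
  classical
  obtain ⟨⟨hba, hnab⟩, hnodom⟩ := hmove
  have hpos : (0:ℝ) < 1 + r := by linarith
  -- Part 1: a' is a possible winner
  have hW : a' ∈ possWinners s r := by
    by_contra hW
    have hnm : ∀ s'' ∈ uncSet s r, ¬ ∀ b, s'' b ≤ s'' a' :=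
      fun s'' h hh => hW ⟨s'', h, hh⟩
    have step : ∀ s'' ∈ uncSet s r, ∀ w y : M, (∀ b, s'' b ≤ s'' w) →
        (∀ b, s'' b ≤ s'' y) → P.lt w y → beats P r s y a' := by
      intro s'' hs'' w y hw hy hlt
      obtain ⟨Q', hQ'⟩ := exists_bot_order (M := M) w
      refine ⟨s'', hs'', Q', ?_⟩
      rw [outcome_nonmax_bot Q' s'' a' w (hnm s'' hs'') hw hQ',
        outcome_eq_self Q' s'' y hy]
      exact hlt
    set F : Finset M := Finset.univ.filter (fun x => beats P r s x a') with hF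
    have hFne : F.Nonempty := by
      obtain ⟨s', hs', Q, hlt⟩ := hba
      exact ⟨outcome Q s' a', Finset.mem_filter.mpr
        ⟨Finset.mem_univ _, step s' hs' _ _ (outcome_max Q s' a) (outcome_max Q s' a') hlt⟩⟩
    obtain ⟨x, hxF, hmaxx⟩ : ∃ x ∈ F, ∀ y ∈ F, ¬ P.lt x y := by
      letI := P
      obtain ⟨x, hx⟩ := Finset.exists_maximal hFne
      exact ⟨x, hx.1, fun y hy hlt =>
        (lt_iff_le_not_ge.mp hlt).2 (hx.2 hy (lt_iff_le_not_ge.mp hlt).1)⟩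
    have hxB : beats P r s x a' := (Finset.mem_filter.mp hxF).2
    have hbax : beats P r s a' x := by
      by_contra h
      exact hnodom x ⟨hxB, h⟩
    obtain ⟨s'', hs'', Q'', hlt⟩ := hbax
    have hxmax : ∀ b, s'' b ≤ s'' x := by
      by_contra h
      rw [outcome_congr Q'' s'' x a' h (hnm s'' hs'')] at hlt
      exact plt_irrefl P _ hlt
    rw [outcome_eq_self Q'' s'' x hxmax] at hlt
    have hyF : outcome Q'' s'' a' ∈ F :=
      Finset.mem_filter.mpr ⟨Finset.mem_univ _, step s'' hs'' x _ hxmax (outcome_max Q'' s'' a') hlt⟩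
    exact hmaxx (outcome Q'' s'' a') hyF hlt
  refine ⟨hW, ?_⟩
  -- Part 2
  obtain ⟨s', hs', Q, hlt⟩ := hba
  by_cases hmax : ∀ b, s' b ≤ s' a'
  · rw [outcome_eq_self Q s' a' hmax] at hlt
    exact ⟨outcome Q s' a, maxim_possWinner hs' (outcome_max Q s' a), hlt⟩
  · have hamax : ∀ b, s' b ≤ s' a := by
      by_contra h
      rw [outcome_congr Q s' a a' h hmax] at hlt
      exact plt_irrefl P _ hlt
    have haW : a ∈ possWinners s r := maxim_possWinner hs' hamax
    by_contra hno
    push_neg at hno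
    have haa' : P.lt a' a := plt_of_le_of_ne P (ple_of_not_lt P (hno a haW)) hne
    set t := min (s a * (1+r)) (s a' * (1+r)) with ht
    have hb1 := possWinner_bound haW
    have hb2 := possWinner_bound hW
    have htge : ∀ c, s c / (1+r) ≤ t := fun c => le_min (hb1 c) (hb2 c)
    set s3 : M → ℝ := fun z => if z = a ∨ z = a' then t else s z / (1+r) with hs3
    have hdm : ∀ c, s c / (1+r) ≤ s c * (1+r) := by
      intro c
      calc s c / (1+r) ≤ s c := div_le_self (hs c) (by linarith)
        _ ≤ s c * (1+r) := le_mul_of_one_le_right (hs c) (by linarith)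
    have hs3S : s3 ∈ uncSet s r := by
      intro c
      by_cases hc : c = a ∨ c = a'
      · simp only [hs3, if_pos hc]
        refine ⟨htge c, ?_⟩
        rcases hc with rfl | rfl
        · exact min_le_left _ _
        · exact min_le_right _ _
      · simp only [hs3, if_neg hc]
        exact ⟨le_refl _, hdm c⟩
    have hval : ∀ b, s3 b ≤ t := by
      intro b
      simp only [hs3]
      by_cases hb : b = a ∨ b = a'
      · rw [if_pos hb]
      · rw [if_neg hb]; exact htge b
    have h3a' : ∀ b, s3 b ≤ s3 a' := by
      intro b
      have h : s3 a' = t := by simp only [hs3, if_pos (Or.inr rfl)]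
      rw [h]; exact hval b
    have h3a : ∀ b, s3 b ≤ s3 a := by
      intro b
      have h : s3 a = t := by simp only [hs3, if_pos (Or.inl rfl)]
      rw [h]; exact hval b
    exact hnab ⟨s3, hs3S, P, by
      rw [outcome_eq_self P s3 a' h3a', outcome_eq_self P s3 a h3a]
      exact haa'⟩
end

section
/- (Proposition 2(C)) Consider a population in which all voters are weak LD voters with the same uncertainty level r ≥ 0, and a sequence a^0, a^1, …, a^T of action profiles in which every consecutive pair is a valid step and a^0 is the truthful profile. Then there are only compromise moves: for every t < T and every voter i with a^{t+1}_i ≠ a^t_i, it holds that a^t_i ≻_i a^{t+1}_i (the voter moves to a less preferred candidate). -/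
namespace OnlyCompromise


noncomputable def mTop {M : Type*} [Fintype M] [Nonempty M] (s : M → ℝ) : ℝ :=
  Finset.univ.sup' Finset.univ_nonempty s

lemma exists_mTop {M : Type*} [Fintype M] [Nonempty M] (s : M → ℝ) :
    ∃ z, mTop s = s z ∧ ∀ x, s x ≤ mTop s := by
  obtain ⟨z, _, hz⟩ := Finset.exists_mem_eq_sup' Finset.univ_nonempty s
  exact ⟨z, hz, fun x => Finset.le_sup' s (Finset.mem_univ x)⟩

lemma bottomOrder {M : Type*} [Fintype M] (x : M) : ∃ Q : LinearOrder M, ∀ z, Q.le x z := by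
  classical
  let e := Fintype.equivFin M
  let g : M → ℕ := fun z => if z = x then 0 else (e z).val + 1
  have hg : Function.Injective g := by
    intro a b h
    by_cases ha : a = x <;> by_cases hb : b = x
    · exact ha.trans hb.symm
    · simp [g, ha, hb] at h
    · simp [g, ha, hb] at h
    · simp only [g, if_neg ha, if_neg hb, Nat.add_right_cancel_iff] at h
      exact e.injective (Fin.val_injective h)
  exact ⟨LinearOrder.lift' g hg, fun z => by show g x ≤ g z; simp [g]⟩

lemma outcome_max {M : Type*} [Fintype M] [Nonempty M] (Q : LinearOrder M) {s' : M → ℝ} {c : M}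
    (h : ∀ b, s' b ≤ s' c) : outcome Q s' c = c := by
  unfold outcome; exact if_pos h

lemma outcome_congr {M : Type*} [Fintype M] [Nonempty M] (Q : LinearOrder M) {s' : M → ℝ} {c d : M}
    (hc : ¬ ∀ b, s' b ≤ s' c) (hd : ¬ ∀ b, s' b ≤ s' d) :
    outcome Q s' c = outcome Q s' d := by
  unfold outcome; rw [if_neg hc, if_neg hd]

lemma outcome_mem {M : Type*} [Fintype M] [Nonempty M] (Q : LinearOrder M) {s' : M → ℝ} {c : M}
    (hc : ¬ ∀ b, s' b ≤ s' c) : ∀ b, s' b ≤ s' (outcome Q s' c) := by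
  unfold outcome; rw [if_neg hc]
  have := @Finset.min'_mem M Q (Finset.univ.filter (fun x => ∀ a, s' a ≤ s' x))
    (by
      obtain ⟨b, _, hb⟩ :=
        Finset.exists_max_image (Finset.univ : Finset M) s' Finset.univ_nonempty
      exact ⟨b, Finset.mem_filter.mpr
        ⟨Finset.mem_univ b, fun a => hb a (Finset.mem_univ a)⟩⟩)
  exact (Finset.mem_filter.mp this).2

/-- If `s x (1+r)² < mTop s` then `x` is never a maximizer of any `s' ∈ uncSet s r`. -/
lemma not_max_of_small {M : Type*} [Fintype M] [Nonempty M] {s s' : M → ℝ} {r : ℝ} {x : M}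
    (hr : 0 ≤ r) (hmem : s' ∈ uncSet s r)
    (hx : s x * ((1+r)*(1+r)) < mTop s) : ¬ ∀ b, s' b ≤ s' x := by
  obtain ⟨z, hz, -⟩ := exists_mTop s
  intro h
  have h1 : (0:ℝ) < 1 + r := by linarith
  have hzl : s z / (1+r) ≤ s' z := (hmem z).1
  have hxu : s' x ≤ s x * (1+r) := (hmem x).2
  have hzx : s' z ≤ s' x := h z
  rw [div_le_iff₀ h1] at hzl
  nlinarith [hz]

/-- Under the voter invariant at `a`, anything that beats w.r.t. current vote `a`
must be a near-winner. -/
lemma big_of_beats {M : Type*} [Fintype M] [Nonempty M] (P0 : LinearOrder M) {r : ℝ} {s : M → ℝ}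
    {a c : M} (hr : 0 ≤ r)
    (hinv : ∀ x, P0.lt a x → s x * ((1+r)*(1+r)) < mTop s)
    (hb : beats P0 r s c a) : mTop s ≤ s c * ((1+r)*(1+r)) := by
  by_contra h
  push_neg at h
  obtain ⟨s', hmem, Q, hlt⟩ := hb
  have hcn : ¬ ∀ b, s' b ≤ s' c := not_max_of_small hr hmem h
  by_cases han : ∀ b, s' b ≤ s' a
  · rw [outcome_max Q han] at hlt
    have hw := outcome_mem Q hcn
    exact not_max_of_small hr hmem (hinv _ hlt) hw
  · rw [outcome_congr Q han hcn] at hlt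
    letI := P0
    exact lt_irrefl _ hlt

/-- Construction: two near-winners can be made joint maximizers. -/
lemma construct {M : Type*} [Fintype M] [Nonempty M] {s : M → ℝ} {r : ℝ} {x y : M}
    (hr : 0 ≤ r) (hs : ∀ c, 0 ≤ s c)
    (hx : mTop s ≤ s x * ((1+r)*(1+r))) (hy : mTop s ≤ s y * ((1+r)*(1+r))) :
    ∃ s' ∈ uncSet s r, (∀ c, s' c ≤ s' x) ∧ s' y = s' x ∧
      ∀ b, s b * ((1+r)*(1+r)) < mTop s → s' b < s' x := by
  have h1 : (0:ℝ) < 1 + r := by linarith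
  set v := min (s x) (s y) * (1+r) with hv
  have hminv : mTop s ≤ min (s x) (s y) * ((1+r)*(1+r)) := by
    rw [min_mul_of_nonneg _ _ (by positivity : (0:ℝ) ≤ (1+r)*(1+r))]
    exact le_min hx hy
  have hsx : min (s x * (1+r)) v = v := by
    apply min_eq_right
    exact mul_le_mul_of_nonneg_right (min_le_left _ _) h1.le
  have hsy : min (s y * (1+r)) v = v := by
    apply min_eq_right
    exact mul_le_mul_of_nonneg_right (min_le_right _ _) h1.le
  refine ⟨fun c => min (s c * (1+r)) v, ?_, ?_, by simp only [hsx, hsy], ?_⟩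
  · intro c
    dsimp only
    constructor
    · rcases le_total (s c * (1+r)) v with h | h
      · rw [min_eq_left h]
        have : s c / (1+r) ≤ s c := div_le_self (hs c) (by linarith)
        nlinarith [hs c]
      · rw [min_eq_right h, div_le_iff₀ h1]
        have hcm : s c ≤ mTop s := (exists_mTop s).choose_spec.2 c
        calc s c ≤ min (s x) (s y) * ((1+r)*(1+r)) := le_trans hcm hminv
        _ = v * (1+r) := by rw [hv]; ring
    · exact min_le_left _ _
  · intro c
    dsimp only
    rw [hsx]
    exact min_le_right _ _
  · intro b hb
    dsimp only
    rw [hsx]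
    have hblt : s b < min (s x) (s y) := by nlinarith
    have : s b * (1+r) < v := by
      rw [hv]; exact mul_lt_mul_of_pos_right hblt h1
    exact lt_of_le_of_lt (min_le_left _ _) this

/-- Two near-winners: the preferred one beats the other (tie scenario). -/
lemma beats_of_two_max {M : Type*} [Fintype M] [Nonempty M] (P0 : LinearOrder M)
    {r : ℝ} {s : M → ℝ} {x y : M} (hr : 0 ≤ r) (hs : ∀ c, 0 ≤ s c)
    (hx : mTop s ≤ s x * ((1+r)*(1+r))) (hy : mTop s ≤ s y * ((1+r)*(1+r)))
    (hlt : P0.lt y x) : beats P0 r s x y := by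
  obtain ⟨s', hmem, hmax, hyx, -⟩ := construct hr hs hx hy
  refine ⟨s', hmem, P0, ?_⟩
  rw [outcome_max P0 hmax, outcome_max P0 (fun c => hyx ▸ hmax c)]
  exact hlt

/-- Near-winners `x ≻ y`, far candidate `b`: then `b` beats `y`. -/
lemma beats_via_third {M : Type*} [Fintype M] [Nonempty M] (P0 : LinearOrder M)
    {r : ℝ} {s : M → ℝ} {x y b : M} (hr : 0 ≤ r) (hs : ∀ c, 0 ≤ s c)
    (hx : mTop s ≤ s x * ((1+r)*(1+r))) (hy : mTop s ≤ s y * ((1+r)*(1+r)))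
    (hb : s b * ((1+r)*(1+r)) < mTop s) (hlt : P0.lt y x) : beats P0 r s b y := by
  obtain ⟨s', hmem, hmax, hyx, hsmall⟩ := construct hr hs hx hy
  obtain ⟨Q, hQ⟩ := bottomOrder x
  refine ⟨s', hmem, Q, ?_⟩
  have hbn : ¬ ∀ c, s' c ≤ s' b := fun h => absurd (h x) (not_le.mpr (hsmall b hb))
  have hob : outcome Q s' b = x := by
    unfold outcome; rw [if_neg hbn]
    letI := Q
    have hxF : x ∈ Finset.univ.filter (fun x => ∀ a, s' a ≤ s' x) :=
      Finset.mem_filter.mpr ⟨Finset.mem_univ x, hmax⟩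
    exact le_antisymm (Finset.min'_le _ x hxF) (Finset.le_min' _ _ _ (fun z _ => hQ z))
  rw [hob, outcome_max Q (fun c => hyx ▸ hmax c)]
  exact hlt




lemma le_mTop {M : Type*} [Fintype M] [Nonempty M] (s : M → ℝ) (x : M) : s x ≤ mTop s :=
  Finset.le_sup' s (Finset.mem_univ x)

/-- The invariant: every candidate a voter strictly prefers to her current vote
is far from winning. -/
def InvP {M : Type*} [Fintype M] [Nonempty M] {I : Type*} [Fintype I]
    (P : I → LinearOrder M) (r : ℝ) (b : I → M) : Prop :=
  ∀ i c, (P i).lt (b i) c → score b c * ((1+r)*(1+r)) < mTop (score b)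

lemma score_mono {M : Type*} {I : Type*} [Fintype I] {b b'' : I → M} {x : M}
    (h : ∀ i, b i = x → b'' i = x) : score b x ≤ score b'' x := by
  classical
  unfold score
  refine Nat.cast_le.mpr (Finset.card_le_card ?_)
  intro i hi
  rw [Finset.mem_filter] at hi ⊢
  exact ⟨Finset.mem_univ i, h i hi.2⟩

lemma step_inv {M : Type*} [Fintype M] [Nonempty M] {I : Type*} [Fintype I]
    (P : I → LinearOrder M) {r : ℝ} (hr : 0 ≤ r) (b b'' : I → M)
    (hstep : validStep P (fun _ => r) b b'')
    (hinv : InvP P r b) :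
    (∀ i, b'' i ≠ b i → (P i).lt (b'' i) (b i)) ∧ InvP P r b'' := by
  set s := score b with hs_def
  set m := mTop (score b) with hm_def
  have hs : ∀ c, (0:ℝ) ≤ s c := fun c => Nat.cast_nonneg _
  have mover : ∀ i, b'' i ≠ b i →
      (P i).lt (b'' i) (b i) ∧ m ≤ s (b'' i) * ((1+r)*(1+r)) ∧
      s (b i) * ((1+r)*(1+r)) < m ∧
      (∀ c, (P i).lt (b'' i) c → s c * ((1+r)*(1+r)) < m) := by
    intro i hne
    rcases hstep i with h | ⟨hD, -⟩
    · exact absurd h hne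
    obtain ⟨⟨hbeats, hnb⟩, -⟩ := hD
    have hinv_i : ∀ x, (P i).lt (b i) x → s x * ((1+r)*(1+r)) < m := hinv i
    have hbig : m ≤ s (b'' i) * ((1+r)*(1+r)) := big_of_beats (P i) hr hinv_i hbeats
    have hlt : (P i).lt (b'' i) (b i) := by
      letI := P i
      rcases hne.lt_or_gt with h | h
      · exact h
      · exact absurd (hinv_i _ h) (not_lt.mpr hbig)
    have hai : s (b i) * ((1+r)*(1+r)) < m := by
      by_contra h'
      push_neg at h'
      exact hnb (beats_of_two_max (P i) hr hs h' hbig hlt)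
    refine ⟨hlt, hbig, hai, ?_⟩
    intro c hc
    by_contra h'
    push_neg at h'
    exact hnb (beats_via_third (P i) hr hs h' hbig hai hc)
  have key : ∀ i c, (P i).lt (b'' i) c → s c * ((1+r)*(1+r)) < m := by
    intro i c hc
    by_cases hne : b'' i = b i
    · exact hinv i c (hne ▸ hc)
    · exact (mover i hne).2.2.2 c hc
  refine ⟨fun i hne => (mover i hne).1, ?_⟩
  have hm'' : m ≤ mTop (score b'') := by
    obtain ⟨z, hz, -⟩ := exists_mTop s
    have hsub : ∀ i, b i = z → b'' i = z := by
      intro i hi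
      by_contra hne'
      have hne : b'' i ≠ b i := by rw [hi]; exact hne'
      have h2 := (mover i hne).2.2.1
      rw [hi] at h2
      have hmz : m = s z := hz
      nlinarith [mul_nonneg (hs z) hr, mul_nonneg (mul_nonneg (hs z) hr) hr, hmz]
    calc m = s z := hz
    _ ≤ score b'' z := score_mono hsub
    _ ≤ mTop (score b'') := le_mTop _ z
  intro i c hc
  have hsmall := key i c hc
  have hle : score b'' c ≤ s c := by
    apply score_mono
    intro j hj
    by_contra hne'
    have hne : b'' j ≠ b j := fun h => hne' (h.symm.trans hj)
    have h2 := (mover j hne).2.1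
    rw [hj] at h2
    exact absurd hsmall (not_lt.mpr h2)
  calc score b'' c * ((1+r)*(1+r)) ≤ s c * ((1+r)*(1+r)) := by nlinarith [hr]
  _ < m := hsmall
  _ ≤ mTop (score b'') := hm''


end OnlyCompromise

/-- Proposition 2(C): with a uniform uncertainty level and a
truthful initial profile, there are only compromise moves: every mover moves to
a strictly less preferred candidate. Here `(P i).lt x y` means voter `i`
strictly prefers `y` to `x`. -/
theorem only_compromise_moves {M : Type*} [Fintype M] [Nonempty M]
    {I : Type*} [Fintype I]
    (P : I → LinearOrder M) (r : ℝ) (hr : 0 ≤ r)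
    (T : ℕ) (a : ℕ → I → M)
    (hsteps : ∀ t < T, validStep P (fun _ => r) (a t) (a (t + 1)))
    (htruth : truthful P (a 0)) :
    ∀ t < T, ∀ i, a (t + 1) i ≠ a t i → (P i).lt (a (t + 1) i) (a t i) := by
  have hbase : OnlyCompromise.InvP P r (a 0) := by
    intro i c hc
    letI := P i
    exact absurd (htruth i c) (not_le.mpr hc)
  have hind : ∀ t, t ≤ T → OnlyCompromise.InvP P r (a t) := by
    intro t
    induction t with
    | zero => exact fun _ => hbase
    | succ t ih =>
      intro h
      have ht : t < T := Nat.lt_of_succ_le h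
      exact (OnlyCompromise.step_inv P hr (a t) (a (t+1)) (hsteps t ht) (ih ht.le)).2
  intro t ht i hne
  exact (OnlyCompromise.step_inv P hr (a t) (a (t+1)) (hsteps t ht) (hind t ht.le)).1 i hne
end

section
/- (Proposition 1) Consider a population of LD voters (finite set I of voters, each voter i with a linear preference order ≻_i on M and uncertainty level r_i ≥ 0). A profile a : I → M is a voting equilibrium (i.e., D_i(s_a, a_i) = ∅ for every i ∈ I) if and only if no voter votes for a locally dominated candidate, i.e., for every i ∈ I there is no candidate a'_i ∈ M that S(s_a, r_i)-dominates a_i (with respect to ≻_i). -/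
lemma dominates_trans {M : Type*} [Fintype M] [Nonempty M]
    (P : LinearOrder M) (r : ℝ) (s : M → ℝ) {a b c : M}
    (hab : dominates P r s a b) (hbc : dominates P r s b c) :
    dominates P r s a c := by
  obtain ⟨⟨s', hs', Q, hlt⟩, hnba⟩ := hab
  obtain ⟨hbeats_bc, hncb⟩ := hbc
  constructor
  · refine ⟨s', hs', Q, ?_⟩
    have h1 : ¬ P.lt (outcome Q s' b) (outcome Q s' c) := fun h => hncb ⟨s', hs', Q, h⟩
    exact @lt_of_le_of_lt M P.toPreorder _ _ _ ((@not_lt M P _ _).mp h1) hlt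
  · rintro ⟨t', ht', R, hlt'⟩
    have h1 : ¬ P.lt (outcome R t' a) (outcome R t' b) := fun h => hnba ⟨t', ht', R, h⟩
    have h2 : ¬ P.lt (outcome R t' b) (outcome R t' c) := fun h => hncb ⟨t', ht', R, h⟩
    exact absurd hlt' ((@not_lt M P _ _).mpr
      (@le_trans M P.toPreorder _ _ _ ((@not_lt M P _ _).mp h2) ((@not_lt M P _ _).mp h1)))

lemma dominates_irrefl {M : Type*} [Fintype M] [Nonempty M]
    (P : LinearOrder M) (r : ℝ) (s : M → ℝ) (a : M) :
    ¬ dominates P r s a a := by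
  rintro ⟨⟨s', hs', Q, hlt⟩, -⟩
  exact @lt_irrefl M P.toPreorder _ hlt

/-- Proposition 1: a profile is a voting equilibrium iff no
voter votes for a locally dominated candidate. -/
theorem voting_equilibrium_iff_no_dominating {M : Type*} [Fintype M] [Nonempty M]
    {I : Type*} [Fintype I]
    (P : I → LinearOrder M) (r : I → ℝ) (hr : ∀ i, 0 ≤ r i)
    (a : I → M) :
    (∀ i, Dset (P i) (r i) (score a) (a i) = ∅) ↔
      (∀ i, ¬ ∃ a', dominates (P i) (r i) (score a) a' (a i)) := by
  constructor
  · intro h i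
    rintro ⟨a', ha'⟩
    set R := dominates (P i) (r i) (score a) with hR
    haveI : IsTrans M R := ⟨fun _ _ _ => dominates_trans _ _ _⟩
    haveI : IsIrrefl M R := ⟨fun x => dominates_irrefl _ _ _ x⟩
    have wf : WellFounded R := Finite.wellFounded_of_trans_of_irrefl R
    obtain ⟨m, hm, hmin⟩ := wf.has_min {c | R c (a i)} ⟨a', ha'⟩
    have : m ∈ Dset (P i) (r i) (score a) (a i) := by
      refine ⟨hm, fun d hd => ?_⟩
      exact hmin d (dominates_trans _ _ _ hd hm) hd
    rw [h i] at this
    exact this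
  · intro h i
    rw [Set.eq_empty_iff_forall_notMem]
    rintro c ⟨hdom, -⟩
    exact h i ⟨c, hdom⟩
end
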